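/- arXiv:1408.6182 — 8 statements merged into one kernel-verified Lean document; each statement's English description precedes it below -/
import Mathlib

section
/- Let x and y be finite strings over a linearly ordered alphabet with y nonempty. If y is not a prefix of x (equivalently, lcp(x, y) < |y|), then lcp(x, y^∞) = lcp(x, y), and x ≺ y^∞ if and only if x <lex y. -/
/-- The length of the longest common prefix of two lists. -/
def lcp {α : Type*} [DecidableEq α] : List α → List α → ℕ
  | a :: x, b :: y => if a = b then lcp x y + 1 else 0
  | _, _ => 0

/-- The first `m` characters of the infinite periodic sequence `y^∞`
    (for nonempty `y`). -/
def infTake {α : Type*} (y : List α) (m : ℕ) : List α :=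
  ((List.replicate m y).flatten).take m

/-! The first `|x|` letters of `y^∞` are those of `y ++ z` for some `z`; since `y` is not a prefix
of `x`, the comparison of `x` with `y ++ z` is settled inside `y`, at position `lcp x y`. -/

section

open List

variable {α : Type*}

theorem infTake_eq_take_append (y : List α) (m : ℕ) : ∃ z, infTake y m = (y ++ z).take m := by
  cases m with
  | zero => exact ⟨[], rfl⟩
  | succ k => exact ⟨(replicate k y).flatten, by rw [infTake, replicate_succ, flatten_cons]⟩

theorem lcp_take_append_of_not_prefix [DecidableEq α] :
    ∀ {x y : List α} (z : List α), ¬ y <+: x → lcp x ((y ++ z).take x.length) = lcp x y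
  | [], _, _, _ => by simp [lcp]
  | _ :: _, [], _, hnp => absurd nil_prefix hnp
  | a :: x, b :: y, z, hnp => by
    simp only [cons_append, length_cons, take_succ_cons, lcp]
    split_ifs with hab
    · subst hab
      rw [lcp_take_append_of_not_prefix z (by simpa using hnp)]
    · rfl

theorem lex_take_append_or_eq_iff_of_not_prefix {r : α → α → Prop} :
    ∀ {x y : List α} (z : List α), ¬ y <+: x →
      ((Lex r x ((y ++ z).take x.length) ∨ x = (y ++ z).take x.length) ↔ Lex r x y)
  | _, [], _, hnp => absurd nil_prefix hnp
  | [], _ :: _, _, _ => by simp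
  | a :: x, b :: y, z, hnp => by
    simp only [cons_append, length_cons, take_succ_cons, cons_lex_cons_iff, cons.injEq]
    by_cases hab : a = b
    · subst hab
      rw [← lex_take_append_or_eq_iff_of_not_prefix (r := r) (y := y) z (by simpa using hnp)]
      tauto
    · simp [hab]

end

theorem lcp_infTake_of_not_prefix_general {α : Type*} [LinearOrder α] (x y : List α)
    (hnp : ¬ y <+: x) :
    lcp x (infTake y x.length) = lcp x y ∧
    ((List.Lex (· < ·) x (infTake y x.length) ∨ x = infTake y x.length) ↔
      List.Lex (· < ·) x y) := by
  obtain ⟨z, hz⟩ := infTake_eq_take_append y x.length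
  rw [hz]
  exact ⟨lcp_take_append_of_not_prefix z hnp, lex_take_append_or_eq_iff_of_not_prefix z hnp⟩

/-- If `y` is nonempty and not a prefix of `x`, then `lcp(x, y^∞) = lcp(x, y)`,
    and `x ≺ y^∞ ↔ x <lex y`. -/
theorem lcp_infTake_of_not_prefix {α : Type*} [LinearOrder α] (x y : List α)
    (hy : y ≠ []) (hnp : ¬ y <+: x) :
    lcp x (infTake y x.length) = lcp x y ∧
    ((List.Lex (· < ·) x (infTake y x.length) ∨ x = infTake y x.length) ↔
      List.Lex (· < ·) x y) :=
  lcp_infTake_of_not_prefix_general x y hnp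
end

section
/- Let y be a nonempty finite string over a linearly ordered alphabet and let x = y ++ x' for some finite string x'. Then lcp(x, y^∞) = |y| + lcp(x', x), and x ≺ y^∞ if and only if x' <lex x. -/
/-!
Since `y^∞ = y ++ y^∞`, comparing `x = y ++ x'` with `y^∞` amounts, after the common block
`y`, to comparing `x'` with `y^∞`, and this gives the same result as comparing `x'` with
`x = y ++ x'`.
Indeed, if `x'` does not start with `y`, both comparisons are decided inside the block `y`;
if `x' = y ++ x''`, strip `y` from both sides and recurse on the shorter `x''`.
-/

section

variable {α : Type*}

theorem infTake_eq_take_flatten_replicate (y : List α) {m n : ℕ} (h : m ≤ n) :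
    infTake y m = (List.replicate n y).flatten.take m := by
  obtain ⟨k, rfl⟩ := Nat.exists_eq_add_of_le h
  cases y with
  | nil => simp [infTake]
  | cons z y =>
    have : m ≤ (List.replicate m (z :: y)).flatten.length := by
      simpa using Nat.le_mul_of_pos_right m (Nat.succ_pos y.length)
    rw [infTake, List.replicate_add, List.flatten_append, List.take_append_of_le_length this]

theorem take_infTake (y : List α) {m n : ℕ} (h : m ≤ n) :
    (infTake y n).take m = infTake y m := by
  rw [infTake_eq_take_flatten_replicate y le_rfl, List.take_take, min_eq_left h,
    ← infTake_eq_take_flatten_replicate y h]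

theorem infTake_length_add (y : List α) (k : ℕ) :
    infTake y (y.length + k) = y ++ infTake y k := by
  rw [infTake_eq_take_flatten_replicate y (Nat.le_succ _), List.replicate_succ, List.flatten_cons,
    List.take_length_add_append, ← infTake_eq_take_flatten_replicate y (Nat.le_add_left k _)]

theorem infTake_eq_take_append_infTake (y : List α) (m : ℕ) :
    infTake y m = (y ++ infTake y m).take m := by
  rw [← infTake_length_add, take_infTake y (Nat.le_add_left m _)]

section Lcp

variable [DecidableEq α]

theorem lcp_take_of_length_le {a : List α} {n : ℕ} (h : a.length ≤ n) (b : List α) :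
    lcp a (b.take n) = lcp a b := by
  induction a generalizing b n with
  | nil => cases b <;> rfl
  | cons x a ih =>
    obtain ⟨n, rfl⟩ := Nat.exists_eq_add_of_le' (Nat.zero_lt_of_lt h)
    cases b with
    | nil => rfl
    | cons z b => simp only [List.take_succ_cons, lcp, ih (by simpa using h)]

theorem lcp_append_append (c a b : List α) :
    lcp (c ++ a) (c ++ b) = c.length + lcp a b := by
  induction c with
  | nil => simp
  | cons x c ih => simp only [List.cons_append, lcp, if_true, ih, List.length_cons]; omega

theorem lcp_append_of_not_prefix {y a : List α} (h : ¬ y <+: a) (t : List α) :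
    lcp a (y ++ t) = lcp a y := by
  induction y generalizing a with
  | nil => exact absurd List.nil_prefix h
  | cons z y ih =>
    cases a with
    | nil => rfl
    | cons x a =>
      by_cases hxz : x = z
      · subst hxz
        simp only [List.cons_append, lcp, if_true, ih (by simpa using h)]
      · simp only [List.cons_append, lcp, hxz, if_false]

theorem lcp_infTake_length {y : List α} (hy : y ≠ []) (a : List α) :
    lcp a (infTake y a.length) = lcp a (y ++ a) := by
  rw [infTake_eq_take_append_infTake, lcp_take_of_length_le le_rfl]
  by_cases hya : y <+: a
  · obtain ⟨a, rfl⟩ := hya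
    have hlen : a.length ≤ y.length + a.length := Nat.le_add_left _ _
    rw [lcp_append_append, lcp_append_append, List.length_append,
      ← lcp_take_of_length_le le_rfl, take_infTake y hlen, lcp_infTake_length hy a]
  · rw [lcp_append_of_not_prefix hya, lcp_append_of_not_prefix hya]
termination_by a.length
decreasing_by subst_vars; simpa using List.length_pos_iff.mpr hy

end Lcp

section Lt

variable [LT α]

theorem append_lt_append_iff_left [Std.Irrefl (· < · : α → α → Prop)]
    (c : List α) {a b : List α} : c ++ a < c ++ b ↔ a < b := by
  induction c with
  | nil => rfl
  | cons x c ih => rwa [List.cons_append, List.cons_append, List.cons_lt_cons_self]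

theorem take_length_lt_iff {a b : List α} (h : a.length ≤ b.length) :
    b.take a.length < a ↔ b < a := by
  induction a generalizing b with
  | nil => simp
  | cons x a ih =>
    cases b with
    | nil => simp at h
    | cons z b =>
      simp only [List.length_cons, List.take_succ_cons, List.cons_lt_cons_iff,
        ih (by simpa using h)]

theorem take_append_lt_iff_of_not_prefix {y a : List α} (h : ¬ y <+: a) (t : List α) :
    (y ++ t).take a.length < a ↔ y < a := by
  induction y generalizing a with
  | nil => exact absurd List.nil_prefix h
  | cons z y ih =>
    cases a with
    | nil => simp
    | cons x a =>
      by_cases hxz : z = x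
      · subst hxz
        simp only [List.cons_append, List.length_cons, List.take_succ_cons,
          List.cons_lt_cons_iff, true_and, ih (by simpa using h)]
      · simp only [List.cons_append, List.length_cons, List.take_succ_cons,
          List.cons_lt_cons_iff, hxz, false_and, or_false]

theorem infTake_length_lt_iff [Std.Irrefl (· < · : α → α → Prop)] {y : List α}
    (hy : y ≠ []) (a : List α) : infTake y a.length < a ↔ y ++ a < a := by
  rw [infTake_eq_take_append_infTake, ← take_length_lt_iff (a := a) (b := y ++ a) (by simp)]
  by_cases hya : y <+: a
  · obtain ⟨a, rfl⟩ := hya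
    have hlen : a.length ≤ y.length + a.length := Nat.le_add_left _ _
    rw [List.length_append, List.take_length_add_append, List.take_length_add_append,
      append_lt_append_iff_left, append_lt_append_iff_left, take_infTake y hlen,
      infTake_length_lt_iff hy a, take_length_lt_iff (by simp)]
  · rw [take_append_lt_iff_of_not_prefix hya, take_append_lt_iff_of_not_prefix hya]
termination_by a.length
decreasing_by subst_vars; simpa using List.length_pos_iff.mpr hy

end Lt

end

/-- If `y` is nonempty and `x = y ++ x'`, then `lcp(x, y^∞) = |y| + lcp(x', x)`,
    and `x ≺ y^∞ ↔ x' <lex x`. -/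
theorem lcp_infTake_of_prefix {α : Type*} [LinearOrder α] (x x' y : List α)
    (hy : y ≠ []) (hx : x = y ++ x') :
    lcp x (infTake y x.length) = y.length + lcp x' x ∧
    ((List.Lex (· < ·) x (infTake y x.length) ∨ x = infTake y x.length) ↔
      List.Lex (· < ·) x' x) := by
  subst hx
  rw [List.length_append, infTake_length_add]
  refine ⟨by rw [lcp_append_append, lcp_infTake_length hy], ?_⟩
  have hne : x' ≠ y ++ x' := fun h => hy (by simpa using congrArg List.length h)
  -- `x' ≤ y^∞` is read as `¬ y^∞ < x'`, the form in which `infTake_length_lt_iff` applies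
  rw [List.lex_lt, List.lex_lt, append_lt_append_iff_left, List.append_cancel_left_eq,
    ← List.le_iff_lt_or_eq, ← List.not_lt, infTake_length_lt_iff hy, List.not_lt,
    List.le_iff_lt_or_eq, or_iff_left hne]
end

section
/- Let ρ be a nonempty finite string and z a finite string over a linearly ordered alphabet. For every natural number i, the strings ρ^i ++ z and ρ^{i+1} ++ z are distinct, and ρ^i ++ z <lex ρ^{i+1} ++ z if and only if z <lex ρ ++ z. Consequently, the sequence (ρ^i ++ z) for i = 0, 1, 2, … is strictly increasing in lexicographic order if z <lex ρ ++ z, and strictly decreasing otherwise. -/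
/-- The `i`-fold concatenation `ρ^i`. -/
def lpow {α : Type*} (ρ : List α) (i : ℕ) : List α :=
  (List.replicate i ρ).flatten

/-! Since `ρ^{i+1} ++ z = ρ^i ++ (ρ ++ z)`, comparing `ρ^i ++ z` with `ρ^{i+1} ++ z` amounts,
after cancelling the common prefix `ρ^i`, to comparing `z` with `ρ ++ z`; this comparison does
not depend on `i`, so consecutive terms of the sequence always move in the same direction, and
strictly so because `ρ ≠ []` forces `ρ ++ z ≠ z`. -/

namespace List

theorem append_lt_append_iff_left {α : Type*} [LT α] [Std.Irrefl (· < · : α → α → Prop)]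
    (l : List α) {s t : List α} : l ++ s < l ++ t ↔ s < t := by
  induction l with
  | nil => rfl
  | cons a l ih => simpa only [cons_append, cons_lt_cons_self] using ih

end List

section

variable {α : Type*} (ρ z : List α) (i : ℕ)

theorem lpow_succ : lpow ρ (i + 1) = lpow ρ i ++ ρ := by
  simp [lpow, List.replicate_succ']

theorem lpow_succ_append : lpow ρ (i + 1) ++ z = lpow ρ i ++ (ρ ++ z) := by
  rw [lpow_succ, List.append_assoc]

theorem lpow_append_eq_lpow_succ_append_iff :
    lpow ρ i ++ z = lpow ρ (i + 1) ++ z ↔ ρ = [] := by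
  rw [lpow_succ_append, List.append_cancel_left_eq, eq_comm, List.append_left_eq_self]

variable [LT α] [Std.Irrefl (· < · : α → α → Prop)]

theorem lpow_append_lt_lpow_succ_append_iff :
    lpow ρ i ++ z < lpow ρ (i + 1) ++ z ↔ z < ρ ++ z := by
  rw [lpow_succ_append, List.append_lt_append_iff_left]

theorem lpow_succ_append_lt_lpow_append_iff :
    lpow ρ (i + 1) ++ z < lpow ρ i ++ z ↔ ρ ++ z < z := by
  rw [lpow_succ_append, List.append_lt_append_iff_left]

end

/-- For nonempty `ρ` and any `z`: for each `i`, `ρ^i ++ z ≠ ρ^{i+1} ++ z`, and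
    `ρ^i ++ z <lex ρ^{i+1} ++ z ↔ z <lex ρ ++ z`. Consequently, the sequence
    `(ρ^i ++ z)_i` is strictly increasing in lexicographic order if
    `z <lex ρ ++ z`, and strictly decreasing otherwise. -/
theorem lpow_append_lex_mono {α : Type*} [LinearOrder α] (ρ z : List α)
    (hρ : ρ ≠ []) :
    (∀ i : ℕ, lpow ρ i ++ z ≠ lpow ρ (i + 1) ++ z ∧
      (List.Lex (· < ·) (lpow ρ i ++ z) (lpow ρ (i + 1) ++ z) ↔
        List.Lex (· < ·) z (ρ ++ z))) ∧
    (List.Lex (· < ·) z (ρ ++ z) →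
      ∀ i j : ℕ, i < j → List.Lex (· < ·) (lpow ρ i ++ z) (lpow ρ j ++ z)) ∧
    (¬ List.Lex (· < ·) z (ρ ++ z) →
      ∀ i j : ℕ, i < j → List.Lex (· < ·) (lpow ρ j ++ z) (lpow ρ i ++ z)) := by
  refine ⟨fun i => ⟨?_, lpow_append_lt_lpow_succ_append_iff ρ z i⟩, fun hinc => ?_,
    fun hdec => ?_⟩
  · exact (lpow_append_eq_lpow_succ_append_iff ρ z i).not.2 hρ
  · exact strictMono_nat_of_lt_succ (f := fun i => lpow ρ i ++ z) fun i =>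
      (lpow_append_lt_lpow_succ_append_iff ρ z i).2 hinc
  · have hne : ρ ++ z ≠ z := List.append_left_eq_self.not.2 hρ
    have hlt : ρ ++ z < z := (not_lt.1 hdec).lt_of_ne hne
    exact strictAnti_nat_of_succ_lt (f := fun i => lpow ρ i ++ z) fun i =>
      (lpow_succ_append_lt_lpow_append_iff ρ z i).2 hlt
end

section
/- Let w be a finite string over a linearly ordered alphabet, let p_0 < p_1 < … < p_k be a periodic progression in w (i.e., the factors w[p_i..p_{i+1}−1] for 0 ≤ i < k are all equal), and let j be a position with p_k ≤ j ≤ |w|. Then for any finite strings s, t and any natural number ℓ, the set of indices i ∈ {0, …, k} such that s.take ℓ ≤lex w[p_i..j].take ℓ and w[p_i..j].take ℓ ≤lex t.take ℓ is a (possibly empty) set of consecutive integers, i.e., of the form {a, a+1, …, b}. -/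
/-- The factor `w[i..j]` of `w` (1-indexed, characters `i` through `j`). -/
def substr {α : Type*} (w : List α) (i j : ℕ) : List α :=
  (w.take j).drop (i - 1)

/-- Non-strict lexicographic order on lists. -/
def lexLe {α : Type*} [LinearOrder α] (u v : List α) : Prop :=
  List.Lex (· < ·) u v ∨ u = v

/-!
Put `x i := w[p i..j]` and let `u` be the common block `w[p 0..p 1 - 1]`; then
`x i = u ++ x (i + 1)`, so `x (k - n) = uⁿ x k`. Prepending `u` is lexicographically monotone,
hence `n ↦ uⁿ x k` is monotone when `x k ≤ u x k` and antitone otherwise, and truncation to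
length `ℓ` is monotone too. The preimage of the lexicographic interval `[s.take ℓ, t.take ℓ]`
under a monotone or antitone map is order-convex, i.e. a set of consecutive indices.
-/

theorem Nat.exists_inter_Iic_eq_Icc_of_ordConnected {S : Set ℕ} (hS : S.OrdConnected) (k : ℕ) :
    ∃ a b : ℕ, S ∩ Set.Iic k = Set.Icc a b := by
  classical
  by_cases hne : ∃ i, i ≤ k ∧ i ∈ S
  · obtain ⟨hak, haS⟩ := Nat.find_spec hne
    have hbS : Nat.findGreatest (· ∈ S) k ∈ S := Nat.findGreatest_spec hak haS
    refine ⟨Nat.find hne, Nat.findGreatest (· ∈ S) k, Set.ext fun i => ⟨?_, fun hi => ?_⟩⟩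
    · rintro ⟨hiS, hik⟩
      exact ⟨Nat.find_min' hne ⟨hik, hiS⟩, Nat.le_findGreatest hik hiS⟩
    · exact ⟨hS.out haS hbS hi, hi.2.trans (Nat.findGreatest_le k)⟩
  · push Not at hne
    refine ⟨1, 0, ?_⟩
    rw [Set.Icc_eq_empty (by omega)]
    exact Set.eq_empty_of_forall_notMem fun i hi => hne i hi.2 hi.1

theorem eq_iterate_of_forall_eq_apply_succ {β : Type*} {f : β → β} {x : ℕ → β} {k : ℕ}
    (h : ∀ i < k, x i = f (x (i + 1))) : ∀ i ≤ k, x i = f^[k - i] (x k) := by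
  intro i hik
  induction hik using Nat.decreasingInduction with
  | self => simp
  | of_succ i hik ih =>
    rw [h i hik, ih, ← Function.iterate_succ_apply' f]
    congr 1
    omega

namespace List

variable {α : Type*}

theorem drop_eq_drop_take_append_drop (l : List α) {a b : ℕ} (hab : a ≤ b) :
    l.drop a = (l.take b).drop a ++ l.drop b := by
  conv_lhs => rw [← take_append_drop (b - a) (l.drop a)]
  rw [drop_take, drop_drop, Nat.add_sub_cancel' hab]

section LinearOrder

variable [LinearOrder α]

theorem monotone_append_left (u : List α) : Monotone (u ++ ·) :=
  fun _ _ h => h.lt_or_eq.elim (fun h => le_of_lt (Lex.append_left _ h u)) (fun h => h ▸ le_rfl)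

theorem monotone_take (n : ℕ) : Monotone (take n : List α → List α) := by
  intro u v h
  induction n generalizing u v with
  | zero => exact le_rfl
  | succ n ih =>
    rcases h.lt_or_eq with hlt | rfl
    · cases hlt with
      | nil => exact le_of_lt Lex.nil
      | cons htail => exact cons_le_cons _ (ih (le_of_lt htail))
      | rel hhead => exact le_of_lt (Lex.rel hhead)
    · exact le_rfl

theorem monotone_or_antitone_iterate_append (u v : List α) :
    Monotone (fun n => (u ++ ·)^[n] v) ∨ Antitone (fun n => (u ++ ·)^[n] v) :=
  (le_total v (u ++ v)).imp (monotone_append_left u).monotone_iterate_of_le_map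
    (monotone_append_left u).antitone_iterate_of_map_le

theorem exists_Icc_take_mem_Icc_of_eq_append_succ {x : ℕ → List α} {u : List α} {k : ℕ}
    (hx : ∀ i < k, x i = u ++ x (i + 1)) (ℓ : ℕ) (s t : List α) :
    ∃ a b : ℕ, ∀ i ≤ k, (s ≤ (x i).take ℓ ∧ (x i).take ℓ ≤ t) ↔ (a ≤ i ∧ i ≤ b) := by
  set g : ℕ → List α := fun n => ((u ++ ·)^[n] (x k)).take ℓ
  have hg : Monotone g ∨ Antitone g :=
    (monotone_or_antitone_iterate_append u (x k)).imp (monotone_take ℓ).comp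
      (monotone_take ℓ).comp_antitone
  have hsub : Antitone (k - ·) := fun _ _ h => Nat.sub_le_sub_left h k
  have hS : {i | g (k - i) ∈ Set.Icc s t}.OrdConnected := by
    rcases hg with hg | hg
    · exact Set.ordConnected_Icc.preimage_anti (hg.comp_antitone hsub :)
    · exact Set.ordConnected_Icc.preimage_mono (hg.comp hsub :)
  obtain ⟨a, b, hab⟩ := Nat.exists_inter_Iic_eq_Icc_of_ordConnected hS k
  refine ⟨a, b, fun i hi => ?_⟩
  rw [eq_iterate_of_forall_eq_apply_succ hx i hi]
  simpa only [Set.mem_inter_iff, Set.mem_ofPred_eq, Set.mem_Iic, Set.mem_Icc, hi, and_true] using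
    Set.ext_iff.1 hab i

end LinearOrder

end List

theorem substr_eq_append {α : Type*} (w : List α) {i m j : ℕ} (him : i ≤ m) (hmj : m ≤ j) :
    substr w i j = substr w i (m - 1) ++ substr w m j := by
  unfold substr
  rw [List.drop_eq_drop_take_append_drop _ (Nat.sub_le_sub_right him 1), List.take_take,
    min_eq_left (by omega)]

theorem lexLe_iff_le {α : Type*} [LinearOrder α] {u v : List α} : lexLe u v ↔ u ≤ v :=
  (le_iff_lt_or_eq (a := u) (b := v)).symm

theorem periodic_progression_interval_consecutive_general {α : Type*} [LinearOrder α]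
    (w s t : List α) (ℓ k j : ℕ) (p : ℕ → ℕ)
    (hmono : ∀ i < k, p i < p (i + 1))
    (hper : ∀ i, i + 1 < k →
      substr w (p i) (p (i + 1) - 1) = substr w (p (i + 1)) (p (i + 2) - 1))
    (hkj : p k ≤ j) :
    ∃ a b : ℕ, ∀ i ≤ k,
      ((lexLe (s.take ℓ) ((substr w (p i) j).take ℓ) ∧
        lexLe ((substr w (p i) j).take ℓ) (t.take ℓ)) ↔ (a ≤ i ∧ i ≤ b)) := by
  have hp : StrictMonoOn p (Set.Iic k) := strictMonoOn_Iic_of_lt_succ hmono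
  have hblock : ∀ i < k, substr w (p i) (p (i + 1) - 1) = substr w (p 0) (p 1 - 1) := by
    intro i hi
    induction i with
    | zero => rfl
    | succ i ih => rw [← hper i hi, ih (by omega)]
  have hstep : ∀ i < k, substr w (p i) j = substr w (p 0) (p 1 - 1) ++ substr w (p (i + 1)) j := by
    intro i hi
    rw [← hblock i hi]
    exact substr_eq_append w (hmono i hi).le
      ((hp.monotoneOn (Set.mem_Iic.2 hi) (Set.mem_Iic.2 le_rfl) hi).trans hkj)
  simpa only [lexLe_iff_le] using
    List.exists_Icc_take_mem_Icc_of_eq_append_succ hstep ℓ (s.take ℓ) (t.take ℓ)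

/-- Let `p 0 < p 1 < … < p k` be a periodic progression in `w` and `p k ≤ j ≤ |w|`.
    Then for any strings `s`, `t` and any `ℓ`, the set of indices `i ∈ {0, …, k}`
    with `s.take ℓ ≤lex (w[p i..j]).take ℓ ≤lex t.take ℓ` is a set of consecutive
    integers `{a, …, b}`. -/
theorem periodic_progression_interval_consecutive {α : Type*} [LinearOrder α]
    (w s t : List α) (ℓ k j : ℕ) (p : ℕ → ℕ)
    (hpos : 1 ≤ p 0)
    (hmono : ∀ i < k, p i < p (i + 1))
    (hper : ∀ i, i + 1 < k →
      substr w (p i) (p (i + 1) - 1) = substr w (p (i + 1)) (p (i + 2) - 1))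
    (hkj : p k ≤ j) (hjw : j ≤ w.length) :
    ∃ a b : ℕ, ∀ i ≤ k,
      ((lexLe (s.take ℓ) ((substr w (p i) j).take ℓ) ∧
        lexLe ((substr w (p i) j).take ℓ) (t.take ℓ)) ↔ (a ≤ i ∧ i ≤ b)) :=
  periodic_progression_interval_consecutive_general w s t ℓ k j p hmono hper hkj
end

section
/- Let u, v, t be finite strings over a linearly ordered alphabet. If lcp(v, t) < lcp(u, t), then v <lex u if and only if v <lex t. -/
/-- If `lcp v t < lcp u t`, then `v <lex u ↔ v <lex t`. -/
theorem lex_iff_of_lcp_lt {α : Type*} [LinearOrder α] (u v t : List α)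
    (h : lcp v t < lcp u t) :
    List.Lex (· < ·) v u ↔ List.Lex (· < ·) v t := by
  induction v generalizing u t with
  | nil =>
    cases u with
    | nil => simp [lcp] at h
    | cons a u' =>
      cases t with
      | nil => simp [lcp] at h
      | cons c t' => exact ⟨fun _ => List.Lex.nil, fun _ => List.Lex.nil⟩
  | cons b v' ih =>
    cases u with
    | nil => simp [lcp] at h
    | cons a u' =>
      cases t with
      | nil => simp [lcp] at h
      | cons c t' =>
        by_cases hac : a = c
        · subst hac
          by_cases hba : b = a
          · subst hba
            simp only [lcp, if_true, reduceIte] at h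
            have hih := ih u' t' (by omega)
            constructor
            · intro hl
              cases hl with
              | rel hr => exact absurd hr (lt_irrefl _)
              | cons hl => exact List.Lex.cons (hih.mp hl)
            · intro hl
              cases hl with
              | rel hr => exact absurd hr (lt_irrefl _)
              | cons hl => exact List.Lex.cons (hih.mpr hl)
          · constructor
            · intro hl
              cases hl with
              | rel hr => exact List.Lex.rel hr
              | cons _ => exact absurd rfl hba
            · intro hl
              cases hl with
              | rel hr => exact List.Lex.rel hr
              | cons _ => exact absurd rfl hba
        · simp [lcp, hac] at h
end

section
/- Let w be a finite string over an alphabet Σ and let $ be a symbol strictly smaller than every character occurring in w. If x and y are substrings of w with x <lex y and x not a prefix of y, then there exists a suffix x' of w ++ [$] such that x <lex x' <lex y. -/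
private lemma lex_append_of_not_prefix {α : Type*} [LinearOrder α] :
    ∀ (x y z : List α), List.Lex (· < ·) x y → ¬ x <+: y →
      List.Lex (· < ·) (x ++ z) y := by
  intro x y z h
  induction h with
  | nil => intro hnp; exact absurd (List.nil_prefix) hnp
  | @cons a l₁ l₂ h ih =>
      intro hnp
      refine List.Lex.cons (ih ?_)
      intro hp
      exact hnp (List.prefix_cons_inj a |>.mpr hp)
  | rel h => intro _; exact List.Lex.rel h

private lemma lex_append_right {α : Type*} [LinearOrder α] :
    ∀ (x z : List α), z ≠ [] → List.Lex (· < ·) x (x ++ z)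
  | [], z, hz => by
      cases z with
      | nil => exact absurd rfl hz
      | cons a t => exact List.Lex.nil
  | a :: x, z, hz => List.Lex.cons (lex_append_right x z hz)

/-- Let `$` be a symbol smaller than every character occurring in `w`. If `x`
    and `y` are (nonempty) substrings of `w` with `x <lex y` and `x` not a
    prefix of `y`, then some nonempty suffix `x'` of `w ++ [$]` satisfies
    `x <lex x' <lex y`. -/
theorem exists_suffix_between {α : Type*} [LinearOrder α]
    (w x y : List α) (dollar : α)
    (hd : ∀ c ∈ w, dollar < c)
    (hx : x ≠ [] ∧ x <:+: w) (hy : y ≠ [] ∧ y <:+: w)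
    (hxy : List.Lex (· < ·) x y) (hnp : ¬ x <+: y) :
    ∃ x' : List α, x' ≠ [] ∧ x' <:+ (w ++ [dollar]) ∧
      List.Lex (· < ·) x x' ∧ List.Lex (· < ·) x' y := by
  obtain ⟨s, t, hst⟩ := hx.2
  refine ⟨x ++ (t ++ [dollar]), by simp, ⟨s, by simp [← hst]⟩, ?_, ?_⟩
  · exact lex_append_right x _ (by simp)
  · exact lex_append_of_not_prefix x y _ hxy hnp
end

section
/- Let W_0 < W_1 < … < W_n be a strictly increasing sequence of natural numbers, and for 1 ≤ i ≤ n let p_i = Nat.log2 (W_{i−1} XOR W_i) be the position of the most significant bit in which the binary representations of W_{i−1} and W_i differ. Then for all 1 ≤ i < j ≤ n with p_i = p_j, there exists k with i < k < j and p_k > p_i. -/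
/-!
Write `p = log2 (W (i-1) ^^^ W i)`. For `a < b` the most significant differing bit of `a` and `b`
is clear in `a` and set in `b`. Hence bit `p` is set in `W i` and, since `p_j = p`, clear in
`W (j-1)`. Between `i` and `j - 1` there is therefore a step `W (k-1) → W k` on which bit `p`
goes from set to clear. That step differs at bit `p`, so `p ≤ p_k`; and `p_k ≠ p`, because at
position `p_k` the smaller number `W (k-1)` has a clear bit.
-/

namespace Nat

lemma le_log2_of_testBit {x q : ℕ} (h : x.testBit q = true) : q ≤ x.log2 := by
  have hx : x ≠ 0 := by rintro rfl; simp at h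
  exact (le_log2 hx).2 (ge_two_pow_of_testBit h)

lemma testBit_log2_xor_of_lt {a b : ℕ} (hab : a < b) :
    a.testBit (a ^^^ b).log2 = false ∧ b.testBit (a ^^^ b).log2 = true := by
  have hne : a ^^^ b ≠ 0 := by simpa using hab.ne
  have hmsb := testBit_log2 hne
  rw [testBit_xor] at hmsb
  have hhigh : ∀ q, (a ^^^ b).log2 < q → b.testBit q = a.testBit q := fun q hq => by
    have := testBit_lt_two_pow ((log2_lt hne).1 hq)
    rw [testBit_xor] at this
    revert this
    cases a.testBit q <;> cases b.testBit q <;> simp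
  cases ha : a.testBit (a ^^^ b).log2 <;> cases hb : b.testBit (a ^^^ b).log2
  · simp [ha, hb] at hmsb
  · exact ⟨rfl, rfl⟩
  · exact absurd (lt_of_testBit _ hb ha hhigh) hab.not_gt
  · simp [ha, hb] at hmsb

lemma exists_pred_and_not_of_lt {P : ℕ → Prop} {i m : ℕ} (him : i ≤ m) (hi : P i)
    (hm : ¬ P m) : ∃ k, i < k ∧ k ≤ m ∧ P (k - 1) ∧ ¬ P k := by
  induction m, him using Nat.le_induction with
  | base => exact absurd hi hm
  | succ m him ih =>
    by_cases hPm : P m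
    · exact ⟨m + 1, by omega, le_rfl, by simpa using hPm, hm⟩
    · obtain ⟨k, hik, hkm, hk⟩ := ih hPm
      exact ⟨k, hik, hkm.trans (le_add_right m 1), hk⟩

end Nat

/-- Let `W 0 < W 1 < … < W n` be strictly increasing naturals, and for
    `1 ≤ i ≤ n` let `p i = Nat.log2 (W (i-1) ^^^ W i)`. Then whenever
    `1 ≤ i < j ≤ n` and `p i = p j`, there is `k` with `i < k < j` and
    `p k > p i`. -/
theorem msb_sequence_condition (n : ℕ) (W : ℕ → ℕ)
    (hW : ∀ i < n, W i < W (i + 1)) :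
    ∀ i j : ℕ, 1 ≤ i → i < j → j ≤ n →
      Nat.log2 (W (i - 1) ^^^ W i) = Nat.log2 (W (j - 1) ^^^ W j) →
      ∃ k : ℕ, i < k ∧ k < j ∧
        Nat.log2 (W (i - 1) ^^^ W i) < Nat.log2 (W (k - 1) ^^^ W k) := by
  intro i j hi hij hjn hp
  set p := Nat.log2 (W (i - 1) ^^^ W i)
  have hstep : ∀ k, 1 ≤ k → k ≤ n → W (k - 1) < W k := fun k hk hkn => by
    simpa [Nat.sub_add_cancel hk] using hW (k - 1) (by omega)
  have hWi := (Nat.testBit_log2_xor_of_lt (hstep i hi (by omega))).2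
  have hWj := (Nat.testBit_log2_xor_of_lt (hstep j (by omega) hjn)).1
  rw [← hp] at hWj
  obtain ⟨k, hik, hkj, hWk, hWk'⟩ := Nat.exists_pred_and_not_of_lt
    (P := fun m => (W m).testBit p) (by omega : i ≤ j - 1) hWi (by simp [hWj])
  have hp_le : p ≤ Nat.log2 (W (k - 1) ^^^ W k) :=
    Nat.le_log2_of_testBit (by simp_all only [Nat.testBit_xor]; rfl)
  have hp_ne : p ≠ Nat.log2 (W (k - 1) ^^^ W k) := by
    intro hpk
    have := (Nat.testBit_log2_xor_of_lt (hstep k (by omega) (by omega))).1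
    rw [← hpk, hWk] at this
    simp at this
  exact ⟨k, hik, by omega, lt_of_le_of_ne hp_le hp_ne⟩
end

section
/- Let T be a full binary tree and let L = lcaSeq T be its LCA sequence. Then for all indices i < j < |L| with L[i] = L[j], there exists k with i < k < j and L[k] < L[i]. (That is, the LCA sequence of a binary tree satisfies the condition of Observation 3.15.) -/
/-- Full binary trees. -/
inductive FullBinTree : Type
  | leaf : FullBinTree
  | node : FullBinTree → FullBinTree → FullBinTree

/-- The LCA sequence of a full binary tree: its `i`-th entry is the depth of the
    lowest common ancestor of the `i`-th and `(i+1)`-th leaves (left to right). -/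
def lcaSeq : FullBinTree → List ℕ
  | .leaf => []
  | .node l r => (lcaSeq l).map (· + 1) ++ [0] ++ (lcaSeq r).map (· + 1)

theorem lcaSeq_len (l r : FullBinTree) :
    (lcaSeq (.node l r)).length = (lcaSeq l).length + 1 + (lcaSeq r).length := by
  simp [lcaSeq]; omega

theorem lcaSeq_left (l r : FullBinTree) (t : ℕ) (ht : t < (lcaSeq l).length) :
    (lcaSeq (.node l r)).getD t 0 = (lcaSeq l).getD t 0 + 1 := by
  rw [lcaSeq, List.getD_append _ _ _ _ (by simp; omega),
    List.getD_append _ _ _ _ (by simpa using ht)]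
  rw [List.getD_eq_getElem _ _ (by simpa using ht), List.getD_eq_getElem _ _ ht]
  simp

theorem lcaSeq_mid (l r : FullBinTree) :
    (lcaSeq (.node l r)).getD (lcaSeq l).length 0 = 0 := by
  rw [lcaSeq]
  rw [List.append_assoc, List.getD_append_right _ _ _ _ (by simp)]
  simp

theorem lcaSeq_right (l r : FullBinTree) (t : ℕ) (ht : t < (lcaSeq r).length) :
    (lcaSeq (.node l r)).getD ((lcaSeq l).length + 1 + t) 0 = (lcaSeq r).getD t 0 + 1 := by
  rw [lcaSeq]
  rw [List.getD_append_right _ _ _ _ (by simp)]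
  have : (lcaSeq l).length + 1 + t - ((lcaSeq l).map (· + 1) ++ [0]).length = t := by
    simp
  rw [this]
  rw [List.getD_eq_getElem _ _ (by simpa using ht), List.getD_eq_getElem _ _ ht]
  simp

/-- The LCA sequence `L` of a full binary tree satisfies: whenever `i < j` and
    `L[i] = L[j]`, there is `k` with `i < k < j` and `L[k] < L[i]`. -/
theorem lcaSeq_condition (T : FullBinTree) (i j : ℕ)
    (hij : i < j) (hj : j < (lcaSeq T).length)
    (heq : (lcaSeq T).getD i 0 = (lcaSeq T).getD j 0) :
    ∃ k : ℕ, i < k ∧ k < j ∧ (lcaSeq T).getD k 0 < (lcaSeq T).getD i 0 := by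
  induction T generalizing i j with
  | leaf => simp [lcaSeq] at hj
  | node l r ihl ihr =>
    rw [lcaSeq_len] at hj
    set m := (lcaSeq l).length with hm
    rcases lt_trichotomy j m with hjm | hjm | hjm
    · -- both in left
      have hi : i < m := lt_trans hij hjm
      rw [lcaSeq_left l r i hi, lcaSeq_left l r j hjm] at heq
      obtain ⟨k, hk1, hk2, hk3⟩ := ihl i j hij hjm (by omega)
      exact ⟨k, hk1, hk2, by rw [lcaSeq_left l r i hi, lcaSeq_left l r k (lt_trans hk2 hjm)]; omega⟩
    · -- j = m: contradiction
      subst hjm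
      rw [lcaSeq_left l r i hij, lcaSeq_mid] at heq
      omega
    · rcases lt_trichotomy i m with him | him | him
      · -- i left, j right: k = m works
        refine ⟨m, by omega, hjm, ?_⟩
        rw [lcaSeq_left l r i him, lcaSeq_mid]
        omega
      · -- i = m: contradiction
        subst him
        obtain ⟨t, rfl, ht⟩ : ∃ t, j = m + 1 + t ∧ t < (lcaSeq r).length :=
          ⟨j - m - 1, by omega, by omega⟩
        rw [lcaSeq_mid, lcaSeq_right l r t ht] at heq
        omega
      · -- both right
        obtain ⟨s, rfl, hs⟩ : ∃ s, i = m + 1 + s ∧ s < (lcaSeq r).length :=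
          ⟨i - m - 1, by omega, by omega⟩
        obtain ⟨t, rfl, ht⟩ : ∃ t, j = m + 1 + t ∧ t < (lcaSeq r).length :=
          ⟨j - m - 1, by omega, by omega⟩
        rw [lcaSeq_right l r s hs, lcaSeq_right l r t ht] at heq
        obtain ⟨k, hk1, hk2, hk3⟩ := ihr s t (by omega) ht (by omega)
        refine ⟨m + 1 + k, by omega, by omega, ?_⟩
        rw [lcaSeq_right l r s hs, lcaSeq_right l r k (lt_trans hk2 ht)]
        omega
end
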